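/- Define the q-commutator [A,B]_q = AB - qBA in an associative algebra. For q-boson bilinears on a three-mode Fock space, the identity b₁⁺ b₃ = [b₁⁺ b₂, b₂⁺ b₃]_q · q^{N₂} holds, where q^{N₂} acts diagonally as q^{n₂}. -/
import Mathlib


open TensorProduct
set_option synthInstance.maxHeartbeats 1000000
set_option maxHeartbeats 1000000

/-- The symmetric q-bracket `[n]_q` for natural `n`. -/
noncomputable def qBracket (q : ℝ) (n : ℕ) : ℝ := (q ^ n - q⁻¹ ^ n) / (q - q⁻¹)


lemma qsub_ne (q : ℝ) (hq : 0 < q) (hq1 : q ≠ 1) : q - q⁻¹ ≠ 0 := by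
  intro h
  have h2 : q * q = 1 := by
    have : q = q⁻¹ := by linarith
    field_simp at this
    nlinarith [this]
  have : (q-1)*(q+1) = 0 := by ring_nf; linarith
  rcases mul_eq_zero.1 this with h3|h3
  · exact hq1 (by linarith)
  · linarith

lemma qBracket_nonneg (q : ℝ) (hq : 0 < q) (n : ℕ) : 0 ≤ qBracket q n := by
  unfold qBracket
  have hinv := mul_inv_cancel₀ hq.ne'
  have hipos : 0 < q⁻¹ := inv_pos.2 hq
  rcases le_total q 1 with h|h
  · have hle : q ≤ q⁻¹ := by nlinarith
    rw [div_nonneg_iff]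
    right
    have := pow_le_pow_left₀ hq.le hle n
    constructor <;> [linarith; linarith]
  · have hle : q⁻¹ ≤ q := by nlinarith
    rw [div_nonneg_iff]
    left
    have := pow_le_pow_left₀ hipos.le hle n
    constructor <;> [linarith; linarith]

lemma qBracket_key (q : ℝ) (hq : 0 < q) (hq1 : q ≠ 1) (n : ℕ) :
    q ^ n * qBracket q (n+1) - q ^ (n+1) * qBracket q n = 1 := by
  have hne := qsub_ne q hq hq1
  have hq0 : q ≠ 0 := hq.ne'
  unfold qBracket
  have key : q ^ n * (q ^ (n+1) - q⁻¹ ^ (n+1)) - q ^ (n+1) * (q ^ n - q⁻¹ ^ n) = q - q⁻¹ := by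
    have h1 : q ^ n * q⁻¹ ^ n = 1 := by rw [← mul_pow, mul_inv_cancel₀ hq0, one_pow]
    calc q ^ n * (q ^ (n+1) - q⁻¹ ^ (n+1)) - q ^ (n+1) * (q ^ n - q⁻¹ ^ n)
        = (q ^ n * q⁻¹ ^ n) * (q - q⁻¹) := by ring
      _ = q - q⁻¹ := by rw [h1, one_mul]
  rw [← mul_div_assoc, ← mul_div_assoc, div_sub_div_same, div_eq_one_iff_eq hne]
  linear_combination key

/-- Standard basis vector `|n⟩` of the one-mode Fock space. -/
noncomputable def ket (n : ℕ) : ℕ →₀ ℂ := Finsupp.single n 1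

/-- `b₁⁺ b₃ = [b₁⁺ b₂, b₂⁺ b₃]_q ⬝ q^{N₂}` for q-boson bilinears on a three-mode
Fock space, with the q-commutator `[A,B]_q = AB - qBA`. -/
theorem qboson_bilinear_qcommutator (q : ℝ) (hq : 0 < q) (hq1 : q ≠ 1)
    (b bp qN : (ℕ →₀ ℂ) →ₗ[ℂ] (ℕ →₀ ℂ))
    (hb0 : b (ket 0) = 0)
    (hb : ∀ n : ℕ, b (ket (n + 1)) = (Real.sqrt (qBracket q (n + 1)) : ℂ) • ket n)
    (hbp : ∀ n : ℕ, bp (ket n) = (Real.sqrt (qBracket q (n + 1)) : ℂ) • ket (n + 1))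
    (hqN : ∀ n : ℕ, qN (ket n) = ((q : ℂ) ^ n) • ket n)
    -- `A = b₁⁺ b₂`, `B = b₂⁺ b₃`, `T = b₁⁺ b₃`, `Q2 = q^{N₂}`:
    (A B T Q2 : ((ℕ →₀ ℂ) ⊗[ℂ] ((ℕ →₀ ℂ) ⊗[ℂ] (ℕ →₀ ℂ))) →ₗ[ℂ]
      ((ℕ →₀ ℂ) ⊗[ℂ] ((ℕ →₀ ℂ) ⊗[ℂ] (ℕ →₀ ℂ))))
    (hA : A = TensorProduct.map bp (TensorProduct.map b LinearMap.id))
    (hB : B = TensorProduct.map LinearMap.id (TensorProduct.map bp b))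
    (hT : T = TensorProduct.map bp (TensorProduct.map LinearMap.id b))
    (hQ2 : Q2 = TensorProduct.map LinearMap.id (TensorProduct.map qN LinearMap.id)) :
    ∀ n₁ n₂ n₃ : ℕ,
      -- `T = AB∘Q2 - q·BA∘Q2`, stated additively since the triple tensor product
      -- only carries an `AddCommMonoid` instance here:
      T (ket n₁ ⊗ₜ (ket n₂ ⊗ₜ ket n₃))
          + (q : ℂ) • B (A (Q2 (ket n₁ ⊗ₜ (ket n₂ ⊗ₜ ket n₃))))
        = A (B (Q2 (ket n₁ ⊗ₜ (ket n₂ ⊗ₜ ket n₃)))) := by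
  intro n₁ n₂ n₃
  subst hA hB hT hQ2
  have hne := qsub_ne q hq hq1
  have sq : ∀ m : ℕ, (Real.sqrt (qBracket q (m+1)) : ℂ) * (Real.sqrt (qBracket q (m+1)) : ℂ)
      = ((qBracket q (m+1) : ℝ) : ℂ) := by
    intro m
    rw [← Complex.ofReal_mul, Real.mul_self_sqrt (qBracket_nonneg q hq (m+1))]
  have key : ∀ m : ℕ, ((q:ℂ)) ^ m * ((qBracket q (m+1) : ℝ) : ℂ)
      - (q:ℂ) ^ (m+1) * ((qBracket q m : ℝ) : ℂ) = 1 := by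
    intro m
    have h := congrArg (fun x : ℝ => (x:ℂ)) (qBracket_key q hq hq1 m)
    push_cast at h
    linear_combination h
  cases n₃ with
  | zero =>
    simp [hb0, hbp, hqN, map_tmul, tmul_zero, smul_zero]
  | succ m₃ =>
    cases n₂ with
    | zero =>
      have h1 : ((qBracket q 1 : ℝ) : ℂ) = 1 := by
        norm_cast
        unfold qBracket
        rw [pow_one, pow_one, div_self hne]
      simp only [map_tmul, LinearMap.id_coe, id_eq, hqN, hbp, hb, hb0, tmul_smul,
        ← smul_tmul', map_smul, smul_smul, pow_zero, one_smul, tmul_zero, zero_tmul,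
        smul_zero, map_zero, add_zero, zero_add]
      match_scalars
      linear_combination (-((Real.sqrt (qBracket q (n₁+1)) : ℂ) * (Real.sqrt (qBracket q (m₃+1)) : ℂ))) * (sq 0)
        - (Real.sqrt (qBracket q (n₁+1)) : ℂ) * (Real.sqrt (qBracket q (m₃+1)) : ℂ) * h1
    | succ m₂ =>
      simp only [map_tmul, LinearMap.id_coe, id_eq, hqN, hbp, hb, hb0, tmul_smul,
        ← smul_tmul', map_smul, smul_smul, tmul_zero, zero_tmul,
        smul_zero, map_zero, add_zero, zero_add]
      match_scalars
      linear_combination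
        (-((Real.sqrt (qBracket q (n₁+1)) : ℂ) * (Real.sqrt (qBracket q (m₃+1)) : ℂ))) * key (m₂+1)
        + (q:ℂ)^(m₂+2) * (Real.sqrt (qBracket q (n₁+1)) : ℂ) * (Real.sqrt (qBracket q (m₃+1)) : ℂ) * sq m₂
        - (q:ℂ)^(m₂+1) * (Real.sqrt (qBracket q (n₁+1)) : ℂ) * (Real.sqrt (qBracket q (m₃+1)) : ℂ) * sq (m₂+1)
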